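/- arXiv:2206.05850 — 5 statements merged into one kernel-verified Lean document; each statement's English description precedes it below -/
import Mathlib

section
/- Let φ ∈ D satisfy ∑_a φ(s,a) > 0 for every state s (this holds automatically whenever ρ(s) > 0 for all s). Define the policy π'(a|s) = φ(s,a) / ∑_{a'} φ(s,a'). Then the occupancy measure of π' recovers φ: d_ρ^{π'}(s,a) = φ(s,a) for all (s,a). -/
open scoped BigOperators
open Matrix

noncomputable section

/-- State-transition matrix `P_π(s,s') = ∑_a π(a|s) P(s'|s,a)` induced by policy `π`. -/
def Pmat {S A : Type*} [Fintype A] (P : S → A → S → ℝ) (π : S → A → ℝ) : Matrix S S ℝ :=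
  Matrix.of fun s s' => ∑ a, π s a * P s a s'

/-- Discounted state-action occupancy measure
`d_ρ^π(s,a) = (1-γ) ∑ₜ γ^t (ρᵀ P_π^t)(s) π(a|s)`. -/
def occupancy {S A : Type*} [Fintype S] [DecidableEq S] [Fintype A]
    (P : S → A → S → ℝ) (γ : ℝ) (ρ : S → ℝ) (π : S → A → ℝ) (s : S) (a : A) : ℝ :=
  (1 - γ) * (∑' t : ℕ, γ ^ t * Matrix.vecMul ρ (Pmat P π ^ t) s) * π s a

/-- Value vector `V_h^π = ∑ₜ γ^t P_π^t h_π` where `h_π(s) = ∑_a π(a|s) h(s,a)`. -/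
def Vvec {S A : Type*} [Fintype S] [DecidableEq S] [Fintype A]
    (P : S → A → S → ℝ) (γ : ℝ) (h : S → A → ℝ) (π : S → A → ℝ) : S → ℝ :=
  ∑' t : ℕ, γ ^ t • (Pmat P π ^ t).mulVec (fun s => ∑ a, π s a * h s a)

/-- Scalar value `J_h(π) = ∑_s ρ(s) V_h^π(s)`. -/
def Jval {S A : Type*} [Fintype S] [DecidableEq S] [Fintype A]
    (P : S → A → S → ℝ) (γ : ℝ) (ρ : S → ℝ) (h : S → A → ℝ) (π : S → A → ℝ) : ℝ :=
  ∑ s, ρ s * Vvec P γ h π s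

/-- If `φ` satisfies the flow equations, is nonnegative, and has positive
state-marginals, then the policy `π'(a|s) = φ(s,a) / ∑_{a'} φ(s,a')` has occupancy measure
exactly `φ`. -/
theorem stmt3 {S A : Type*} [Fintype S] [DecidableEq S] [Fintype A] [Nonempty S] [Nonempty A]
    (P : S → A → S → ℝ) (hP0 : ∀ s a s', 0 ≤ P s a s') (hP1 : ∀ s a, ∑ s', P s a s' = 1)
    (γ : ℝ) (hγ0 : 0 < γ) (hγ1 : γ < 1)
    (ρ : S → ℝ) (hρ0 : ∀ s, 0 ≤ ρ s) (hρ1 : ∑ s, ρ s = 1)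
    (φ : S → A → ℝ) (hφ0 : ∀ s a, 0 ≤ φ s a)
    (hφflow : ∀ s, ∑ a, φ s a = (1 - γ) * ρ s + γ * ∑ s', ∑ a', φ s' a' * P s' a' s)
    (hφpos : ∀ s, 0 < ∑ a, φ s a) :
    ∀ s a, occupancy P γ ρ (fun s a => φ s a / ∑ a', φ s a') s a = φ s a := by
  classical
  have hγne : (1:ℝ) - γ ≠ 0 := by linarith
  intro s a
  set μ : S → ℝ := fun x => ∑ a', φ x a' with hμdef
  have hμpos : ∀ x, 0 < μ x := hφpos
  set π : S → A → ℝ := fun s a => φ s a / ∑ a', φ s a' with hπdef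
  set M : Matrix S S ℝ := Pmat P π with hMdef
  have hπ0 : ∀ x b, 0 ≤ π x b := fun x b => div_nonneg (hφ0 x b) (hμpos x).le
  have hπsum : ∀ x, ∑ b, π x b = 1 := by
    intro x
    simp only [hπdef]
    rw [← Finset.sum_div]
    exact div_self (hμpos x).ne'
  have hM0 : ∀ x y, 0 ≤ M x y :=
    fun x y => Finset.sum_nonneg fun b _ => mul_nonneg (hπ0 x b) (hP0 x b y)
  have hMrow : ∀ x, ∑ y, M x y = 1 := by
    intro x
    simp only [hMdef, Pmat, Matrix.of_apply]
    rw [Finset.sum_comm]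
    simp_rw [← Finset.mul_sum, hP1, mul_one]
    exact hπsum x
  have hpow : ∀ t : ℕ, (∀ x y, 0 ≤ (M ^ t) x y) ∧ (∀ x, ∑ y, (M ^ t) x y = 1) := by
    intro t
    induction t with
    | zero =>
      constructor
      · intro x y
        by_cases h : x = y <;> simp [Matrix.one_apply, h]
      · intro x; simp [Matrix.one_apply]
    | succ n ih =>
      constructor
      · intro x y
        rw [pow_succ, Matrix.mul_apply]
        exact Finset.sum_nonneg fun k _ => mul_nonneg (ih.1 x k) (hM0 k y)
      · intro x
        simp_rw [pow_succ, Matrix.mul_apply]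
        rw [Finset.sum_comm]
        simp_rw [← Finset.mul_sum, hMrow, mul_one]
        exact ih.2 x
  have hpowle : ∀ (t : ℕ) (x y : S), (M ^ t) x y ≤ 1 := by
    intro t x y
    calc (M ^ t) x y ≤ ∑ z, (M ^ t) x z :=
          Finset.single_le_sum (fun z _ => (hpow t).1 x z) (Finset.mem_univ y)
      _ = 1 := (hpow t).2 x
  -- bounds on ρᵀ M^t
  have hv0 : ∀ (t : ℕ) (x : S), 0 ≤ Matrix.vecMul ρ (M ^ t) x := by
    intro t x
    rw [Matrix.vecMul, dotProduct]
    exact Finset.sum_nonneg fun i _ => mul_nonneg (hρ0 i) ((hpow t).1 i x)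
  have hv1 : ∀ (t : ℕ) (x : S), Matrix.vecMul ρ (M ^ t) x ≤ 1 := by
    intro t x
    rw [Matrix.vecMul, dotProduct]
    calc ∑ i, ρ i * (M ^ t) i x ≤ ∑ i, ρ i * 1 :=
          Finset.sum_le_sum fun i _ => mul_le_mul_of_nonneg_left (hpowle t i x) (hρ0 i)
      _ = 1 := by simpa using hρ1
  -- flow equation in matrix form
  have hflowM : ∀ x, μ x = (1 - γ) * ρ x + γ * Matrix.vecMul μ M x := by
    intro x
    have h1 : Matrix.vecMul μ M x = ∑ s', ∑ a', φ s' a' * P s' a' x := by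
      rw [Matrix.vecMul, dotProduct]
      apply Finset.sum_congr rfl
      intro i _
      simp only [hMdef, Pmat, Matrix.of_apply, hπdef, Finset.mul_sum]
      apply Finset.sum_congr rfl
      intro b _
      rw [div_mul_eq_mul_div, ← mul_div_assoc, mul_comm (μ i), mul_div_assoc,
        div_self (hμpos i).ne', mul_one]
    rw [h1]
    exact hφflow x
  -- key identity
  have key : ∀ n : ℕ, μ s =
      (1 - γ) * ∑ t ∈ Finset.range n, γ ^ t * Matrix.vecMul ρ (M ^ t) s
        + γ ^ n * Matrix.vecMul μ (M ^ n) s := by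
    intro n
    induction n with
    | zero => simp [Matrix.vecMul_one]
    | succ n ih =>
      have hflowM' : ∀ x, μ x = (1 - γ) * ρ x + γ * ∑ i, μ i * M i x := by
        intro x
        simpa [Matrix.vecMul, dotProduct] using hflowM x
      have h2 : Matrix.vecMul μ (M ^ n) s
          = (1 - γ) * Matrix.vecMul ρ (M ^ n) s + γ * Matrix.vecMul μ (M ^ (n+1)) s := by
        have h3 : Matrix.vecMul μ (M ^ (n+1)) s
            = Matrix.vecMul (Matrix.vecMul μ M) (M ^ n) s := by
          rw [Matrix.vecMul_vecMul, ← pow_succ']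
        rw [h3]
        simp only [Matrix.vecMul, dotProduct]
        rw [Finset.mul_sum, Finset.mul_sum, ← Finset.sum_add_distrib]
        apply Finset.sum_congr rfl
        intro i _
        rw [hflowM' i]
        ring
      rw [ih, Finset.sum_range_succ, h2]
      ring
  -- summability and limit
  set f : ℕ → ℝ := fun t => γ ^ t * Matrix.vecMul ρ (M ^ t) s with hfdef
  have hf0 : ∀ t, 0 ≤ f t := fun t => mul_nonneg (pow_nonneg hγ0.le t) (hv0 t s)
  have hfle : ∀ t, f t ≤ γ ^ t := by
    intro t
    calc f t ≤ γ ^ t * 1 := mul_le_mul_of_nonneg_left (hv1 t s) (pow_nonneg hγ0.le t)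
      _ = γ ^ t := mul_one _
  have hsum : Summable f :=
    Summable.of_nonneg_of_le hf0 hfle (summable_geometric_of_lt_one hγ0.le hγ1)
  have htend : Filter.Tendsto (fun n => ∑ t ∈ Finset.range n, f t)
      Filter.atTop (nhds (∑' t, f t)) := hsum.hasSum.tendsto_sum_nat
  -- partial sums also tend to μ s / (1 - γ)
  have hC : ∀ n : ℕ, |γ ^ n * Matrix.vecMul μ (M ^ n) s| ≤ γ ^ n * ∑ i, μ i := by
    intro n
    have h0 : 0 ≤ Matrix.vecMul μ (M ^ n) s := by
      rw [Matrix.vecMul, dotProduct]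
      exact Finset.sum_nonneg fun i _ => mul_nonneg (hμpos i).le ((hpow n).1 i s)
    have h1 : Matrix.vecMul μ (M ^ n) s ≤ ∑ i, μ i := by
      rw [Matrix.vecMul, dotProduct]
      calc ∑ i, μ i * (M ^ n) i s ≤ ∑ i, μ i * 1 :=
            Finset.sum_le_sum fun i _ => mul_le_mul_of_nonneg_left (hpowle n i s) (hμpos i).le
        _ = ∑ i, μ i := by simp
    rw [abs_of_nonneg (mul_nonneg (pow_nonneg hγ0.le n) h0)]
    exact mul_le_mul_of_nonneg_left h1 (pow_nonneg hγ0.le n)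
  have htail : Filter.Tendsto (fun n => γ ^ n * Matrix.vecMul μ (M ^ n) s)
      Filter.atTop (nhds 0) := by
    have hgeo : Filter.Tendsto (fun n : ℕ => γ ^ n * ∑ i, μ i) Filter.atTop (nhds 0) := by
      have := (tendsto_pow_atTop_nhds_zero_of_lt_one hγ0.le hγ1).mul_const (∑ i, μ i)
      simpa using this
    exact squeeze_zero_norm hC hgeo
  have htend2 : Filter.Tendsto (fun n => ∑ t ∈ Finset.range n, f t)
      Filter.atTop (nhds (μ s / (1 - γ))) := by
    have heq : ∀ n : ℕ, ∑ t ∈ Finset.range n, f t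
        = (μ s - γ ^ n * Matrix.vecMul μ (M ^ n) s) / (1 - γ) := by
      intro n
      have := key n
      field_simp
      linarith [key n]
    simp_rw [heq]
    have : Filter.Tendsto (fun n => (μ s - γ ^ n * Matrix.vecMul μ (M ^ n) s) / (1 - γ))
        Filter.atTop (nhds ((μ s - 0) / (1 - γ))) :=
      ((tendsto_const_nhds.sub htail)).div_const (1 - γ)
    simpa using this
  have hts : (∑' t, f t) = μ s / (1 - γ) := tendsto_nhds_unique htend htend2
  -- finish
  show (1 - γ) * (∑' t : ℕ, γ ^ t * Matrix.vecMul ρ (Pmat P π ^ t) s) * π s a = φ s a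
  rw [← hMdef, show (∑' t : ℕ, γ ^ t * Matrix.vecMul ρ (M ^ t) s) = ∑' t, f t from rfl, hts]
  rw [hπdef]
  show (1 - γ) * (μ s / (1 - γ)) * (φ s a / μ s) = φ s a
  rw [mul_comm (1 - γ) (μ s / (1 - γ)), div_mul_cancel₀ _ hγne, mul_div_assoc', mul_comm, mul_div_assoc,
    div_self (hμpos s).ne', mul_one]
end
end

section
/- Conservative linear-programming gap: Let r : S×A → [0,1]. Suppose φ* maximizes ⟨r,φ⟩ over {φ ∈ D : ⟨g^i,φ⟩ ≥ 0 for all i}; suppose there is a Slater point φ̃ ∈ D with ⟨g^i,φ̃⟩ ≥ (1−γ)·φ_s for all i, where φ_s > 0; and let 0 ≤ κ ≤ φ_s. Then φ̂ := (1 − κ/φ_s)·φ* + (κ/φ_s)·φ̃ belongs to D, satisfies ⟨g^i,φ̂⟩ ≥ (1−γ)κ for all i, and ⟨r,φ*⟩ − ⟨r,φ̂⟩ ≤ κ/φ_s. Consequently, the maximum of ⟨r,φ⟩ over the conservative feasible set {φ ∈ D : ⟨g^i,φ⟩ ≥ (1−γ)κ for all i} is at least ⟨r,φ*⟩ − κ/φ_s.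 -/
open scoped BigOperators
open Matrix

noncomputable section

/-- Membership in the set `D` of occupancy-measure candidates: nonnegativity plus the
flow equations. -/
def inD {S A : Type*} [Fintype S] [Fintype A] (P : S → A → S → ℝ) (γ : ℝ) (ρ : S → ℝ)
    (φ : S → A → ℝ) : Prop :=
  (∀ s a, 0 ≤ φ s a) ∧
  ∀ s, ∑ a, φ s a = (1 - γ) * ρ s + γ * ∑ s', ∑ a', φ s' a' * P s' a' s

/-- Inner product `⟨h, φ⟩ = ∑_{s,a} h(s,a) φ(s,a)`. -/
def ip {S A : Type*} [Fintype S] [Fintype A] (h φ : S → A → ℝ) : ℝ :=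
  ∑ s, ∑ a, h s a * φ s a


lemma ip_combo {S A : Type*} [Fintype S] [Fintype A] (h φ ψ : S → A → ℝ) (a b : ℝ) :
    ip h (fun s x => a * φ s x + b * ψ s x) = a * ip h φ + b * ip h ψ := by
  simp only [ip, Finset.mul_sum]
  rw [← Finset.sum_add_distrib]
  refine Finset.sum_congr rfl fun s _ => ?_
  rw [← Finset.sum_add_distrib]
  refine Finset.sum_congr rfl fun x _ => ?_
  ring

lemma sum_inD {S A : Type*} [Fintype S] [Fintype A] (P : S → A → S → ℝ)
    (hP1 : ∀ s a, ∑ s', P s a s' = 1) (γ : ℝ) (hγ1 : γ < 1) (ρ : S → ℝ) (hρ1 : ∑ s, ρ s = 1)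
    (φ : S → A → ℝ) (h : inD P γ ρ φ) : ∑ s, ∑ a, φ s a = 1 := by
  have key : ∑ s, ∑ a, φ s a = (1 - γ) + γ * ∑ s, ∑ a, φ s a := by
    calc ∑ s, ∑ a, φ s a = ∑ s, ((1 - γ) * ρ s + γ * ∑ s', ∑ a', φ s' a' * P s' a' s) := by
          exact Finset.sum_congr rfl fun s _ => h.2 s
    _ = (1 - γ) * ∑ s, ρ s + γ * ∑ s, ∑ s', ∑ a', φ s' a' * P s' a' s := by
          rw [Finset.sum_add_distrib, ← Finset.mul_sum, ← Finset.mul_sum]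
    _ = (1 - γ) + γ * ∑ s, ∑ a, φ s a := by
          rw [hρ1, mul_one]
          congr 1
          rw [Finset.sum_comm]
          congr 1
          refine Finset.sum_congr rfl fun s' _ => ?_
          rw [Finset.sum_comm]
          refine Finset.sum_congr rfl fun a' _ => ?_
          rw [← Finset.mul_sum, hP1, mul_one]
  nlinarith [key]

/-- Conservative linear-programming gap. -/
theorem stmt5 {S A : Type*} [Fintype S] [DecidableEq S] [Fintype A] [Nonempty S] [Nonempty A]
    (P : S → A → S → ℝ) (hP0 : ∀ s a s', 0 ≤ P s a s') (hP1 : ∀ s a, ∑ s', P s a s' = 1)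
    (γ : ℝ) (hγ0 : 0 < γ) (hγ1 : γ < 1)
    (ρ : S → ℝ) (hρ0 : ∀ s, 0 ≤ ρ s) (hρ1 : ∑ s, ρ s = 1)
    (I : ℕ) (r : S → A → ℝ) (hr : ∀ s a, r s a ∈ Set.Icc (0 : ℝ) 1)
    (g : Fin I → S → A → ℝ) (hg : ∀ i s a, g i s a ∈ Set.Icc (-1 : ℝ) 1)
    (φstar : S → A → ℝ) (hstar : inD P γ ρ φstar)
    (hstarfeas : ∀ i, 0 ≤ ip (g i) φstar)
    (hmax : ∀ φ, inD P γ ρ φ → (∀ i, 0 ≤ ip (g i) φ) → ip r φ ≤ ip r φstar)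
    (φtilde : S → A → ℝ) (htilde : inD P γ ρ φtilde)
    (φs : ℝ) (hφs : 0 < φs)
    (hslater : ∀ i, (1 - γ) * φs ≤ ip (g i) φtilde)
    (κ : ℝ) (hκ0 : 0 ≤ κ) (hκ1 : κ ≤ φs) :
    inD P γ ρ (fun s a => (1 - κ / φs) * φstar s a + (κ / φs) * φtilde s a) ∧
    (∀ i, (1 - γ) * κ ≤ ip (g i) (fun s a => (1 - κ / φs) * φstar s a + (κ / φs) * φtilde s a)) ∧
    ip r φstar - ip r (fun s a => (1 - κ / φs) * φstar s a + (κ / φs) * φtilde s a) ≤ κ / φs ∧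
    ∃ φ : S → A → ℝ, inD P γ ρ φ ∧ (∀ i, (1 - γ) * κ ≤ ip (g i) φ) ∧
      ip r φstar - κ / φs ≤ ip r φ := by
  set l := κ / φs with hl
  have hl0 : 0 ≤ l := div_nonneg hκ0 hφs.le
  have hl1 : l ≤ 1 := (div_le_one hφs).2 hκ1
  have hinD : inD P γ ρ (fun s a => (1 - l) * φstar s a + l * φtilde s a) := by
    constructor
    · intro s a
      have h1 := hstar.1 s a
      have h2 := htilde.1 s a
      simp only
      nlinarith
    · intro s
      have h1 := hstar.2 s
      have h2 := htilde.2 s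
      simp only [Finset.sum_add_distrib, ← Finset.mul_sum]
      rw [h1, h2]
      have : ∀ c : S → A → ℝ, (∑ s', ∑ a', ((1 - l) * c s' a' + l * c s' a') * P s' a' s)
          = ∑ s', ∑ a', c s' a' * P s' a' s := by
        intro c; refine Finset.sum_congr rfl fun s' _ => Finset.sum_congr rfl fun a' _ => ?_; ring
      have expand : (∑ s', ∑ a', ((1 - l) * φstar s' a' + l * φtilde s' a') * P s' a' s)
          = (1 - l) * (∑ s', ∑ a', φstar s' a' * P s' a' s)
            + l * (∑ s', ∑ a', φtilde s' a' * P s' a' s) := by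
        simp only [Finset.mul_sum]
        rw [← Finset.sum_add_distrib]
        refine Finset.sum_congr rfl fun s' _ => ?_
        rw [← Finset.sum_add_distrib]
        refine Finset.sum_congr rfl fun a' _ => ?_
        ring
      rw [expand]; ring
  have hfeas : ∀ i, (1 - γ) * κ ≤ ip (g i) (fun s a => (1 - l) * φstar s a + l * φtilde s a) := by
    intro i
    rw [ip_combo]
    have h1 := hstarfeas i
    have h2 := hslater i
    have hκeq : κ = l * φs := by rw [hl]; field_simp
    nlinarith
  have hsum_star := sum_inD P hP1 γ hγ1 ρ hρ1 φstar hstar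
  have hrstar_le : ip r φstar ≤ 1 := by
    rw [← hsum_star]
    refine Finset.sum_le_sum fun s _ => Finset.sum_le_sum fun a _ => ?_
    have := (hr s a).2
    have := hstar.1 s a
    nlinarith
  have hrtilde_nn : 0 ≤ ip r φtilde :=
    Finset.sum_nonneg fun s _ => Finset.sum_nonneg fun a _ =>
      mul_nonneg (hr s a).1 (htilde.1 s a)
  have hgap : ip r φstar - ip r (fun s a => (1 - l) * φstar s a + l * φtilde s a) ≤ l := by
    rw [ip_combo]
    nlinarith
  exact ⟨hinD, hfeas, hgap, _, hinD, hfeas, by linarith⟩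
end
end

section
/- Let η > 0, 0 ≤ κ ≤ 1/(1−γ) for some γ ∈ (0,1), let a_0, …, a_{K−1} be real numbers with |a_k| ≤ 1/(1−γ) for all k, define λ^0 = 0 and λ^{k+1} = max(0, λ^k − η(a_k − κ)), and let b be any real number with b ≥ κ. Then −(1/K) ∑_{k=0}^{K−1} λ^k (b − a_k) ≤ (η/(2K)) ∑_{k=0}^{K−1} (a_k − κ)² ≤ 2η/(1−γ)². -/
open scoped BigOperators

/-- For the projected dual update with `|a_k| ≤ 1/(1-γ)`,
`0 ≤ κ ≤ 1/(1-γ)` and a comparator value `b ≥ κ`,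
`-(1/K) ∑_{k<K} λ^k (b - a_k) ≤ (η/(2K)) ∑_{k<K} (a_k - κ)² ≤ 2η/(1-γ)²`. -/
theorem stmt7 (η : ℝ) (hη : 0 < η) (γ : ℝ) (hγ0 : 0 < γ) (hγ1 : γ < 1)
    (κ : ℝ) (hκ0 : 0 ≤ κ) (hκ1 : κ ≤ 1 / (1 - γ))
    (K : ℕ) (hK : 0 < K) (a : ℕ → ℝ) (ha : ∀ k, k < K → |a k| ≤ 1 / (1 - γ))
    (lam : ℕ → ℝ) (h0 : lam 0 = 0)
    (hrec : ∀ k, k < K → lam (k + 1) = max 0 (lam k - η * (a k - κ)))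
    (b : ℝ) (hb : κ ≤ b) :
    -((1 / (K : ℝ)) * ∑ k ∈ Finset.range K, lam k * (b - a k))
        ≤ (η / (2 * (K : ℝ))) * ∑ k ∈ Finset.range K, (a k - κ) ^ 2 ∧
    (η / (2 * (K : ℝ))) * ∑ k ∈ Finset.range K, (a k - κ) ^ 2 ≤ 2 * η / (1 - γ) ^ 2 := by
  have hKpos : (0 : ℝ) < K := by exact_mod_cast hK
  have hg : (0 : ℝ) < 1 - γ := by linarith
  set M := 1 / (1 - γ) with hM
  have hMpos : 0 < M := by positivity
  -- nonnegativity of lam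
  have hnn : ∀ n, n ≤ K → 0 ≤ lam n := by
    intro n hn
    cases n with
    | zero => simp [h0]
    | succ k =>
      rw [hrec k (by omega)]
      exact le_max_left _ _
  -- key telescoping bound
  have key : ∀ n, n ≤ K →
      (lam n) ^ 2 ≤ ∑ k ∈ Finset.range n,
        (η ^ 2 * (a k - κ) ^ 2 - 2 * η * lam k * (a k - κ)) := by
    intro n hn
    induction n with
    | zero => simp [h0]
    | succ m ih =>
      have hm : m ≤ K := by omega
      have ihm := ih hm
      rw [hrec m (by omega), Finset.sum_range_succ]
      have hsq : (max 0 (lam m - η * (a m - κ))) ^ 2 ≤ (lam m - η * (a m - κ)) ^ 2 := by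
        rcases le_or_gt (lam m - η * (a m - κ)) 0 with h | h
        · rw [max_eq_left h]; simpa using sq_nonneg (lam m - η * (a m - κ))
        · rw [max_eq_right h.le]
      nlinarith [hsq]
  -- from key at n = K
  have hKK := key K le_rfl
  have hlamK := hnn K le_rfl
  have hsum : ∑ k ∈ Finset.range K, lam k * (a k - κ)
      ≤ (η / 2) * ∑ k ∈ Finset.range K, (a k - κ) ^ 2 := by
    have h1 : 0 ≤ ∑ k ∈ Finset.range K,
        (η ^ 2 * (a k - κ) ^ 2 - 2 * η * lam k * (a k - κ)) := by
      nlinarith [hKK, sq_nonneg (lam K)]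
    rw [Finset.sum_sub_distrib] at h1
    rw [← Finset.mul_sum] at h1
    have h2 : ∑ k ∈ Finset.range K, 2 * η * lam k * (a k - κ)
        = 2 * η * ∑ k ∈ Finset.range K, lam k * (a k - κ) := by
      rw [Finset.mul_sum]; exact Finset.sum_congr rfl (fun k _ => by ring)
    rw [h2] at h1
    nlinarith [h1]
  constructor
  · -- first inequality
    have hstep : ∑ k ∈ Finset.range K, lam k * (a k - b)
        ≤ ∑ k ∈ Finset.range K, lam k * (a k - κ) := by
      apply Finset.sum_le_sum
      intro k hk
      have hk' : k < K := Finset.mem_range.mp hk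
      have := hnn k hk'.le
      nlinarith
    have hneg : -(∑ k ∈ Finset.range K, lam k * (b - a k))
        = ∑ k ∈ Finset.range K, lam k * (a k - b) := by
      rw [← Finset.sum_neg_distrib]
      congr 1; ext k; ring
    have hfin : -(∑ k ∈ Finset.range K, lam k * (b - a k))
        ≤ (η / 2) * ∑ k ∈ Finset.range K, (a k - κ) ^ 2 := by
      rw [hneg]; exact hstep.trans hsum
    calc -(1 / (K : ℝ) * ∑ k ∈ Finset.range K, lam k * (b - a k))
        = (1 / (K : ℝ)) * (-(∑ k ∈ Finset.range K, lam k * (b - a k))) := by ring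
      _ ≤ (1 / (K : ℝ)) * ((η / 2) * ∑ k ∈ Finset.range K, (a k - κ) ^ 2) := by
          apply mul_le_mul_of_nonneg_left hfin (by positivity)
      _ = (η / (2 * (K : ℝ))) * ∑ k ∈ Finset.range K, (a k - κ) ^ 2 := by
          ring
  · -- second inequality
    have hbound : ∑ k ∈ Finset.range K, (a k - κ) ^ 2 ≤ (K : ℝ) * (4 * M ^ 2) := by
      calc ∑ k ∈ Finset.range K, (a k - κ) ^ 2
          ≤ ∑ _k ∈ Finset.range K, (4 * M ^ 2) := by
            apply Finset.sum_le_sum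
            intro k hk
            have hk' : k < K := Finset.mem_range.mp hk
            have h1 := ha k hk'
            have h2 := abs_le.mp h1
            nlinarith [h2.1, h2.2, hκ0, hκ1, mul_nonneg (sub_nonneg.mpr h2.2) (sub_nonneg.mpr hκ1)]
        _ = (K : ℝ) * (4 * M ^ 2) := by
            rw [Finset.sum_const, Finset.card_range]; simp
    have hM2 : M ^ 2 = 1 / (1 - γ) ^ 2 := by
      rw [hM, div_pow, one_pow]
    calc (η / (2 * (K : ℝ))) * ∑ k ∈ Finset.range K, (a k - κ) ^ 2
        ≤ (η / (2 * (K : ℝ))) * ((K : ℝ) * (4 * M ^ 2)) := by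
          apply mul_le_mul_of_nonneg_left hbound (by positivity)
      _ = 2 * η * M ^ 2 := by field_simp; ring
      _ = 2 * η / (1 - γ) ^ 2 := by rw [hM2]; ring
end

section
/- Gradient bound for the value function (Lemma 2 of the paper): Assume the parametrized policy class satisfies the score bound ‖∇_θ log π_θ(a|s)‖₂ ≤ G for all θ ∈ ℝ^d, s ∈ S, a ∈ A. Let h : S×A → ℝ with |h(s,a)| ≤ 1 for all (s,a). Then the map θ ↦ J_h(π_θ) is differentiable on ℝ^d and its gradient satisfies ‖∇_θ J_h(π_θ)‖₂ ≤ G/(1−γ)² for every θ. -/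
open scoped BigOperators
open Matrix

noncomputable section

/-- Gradient of the log-policy (score function) at parameter `θ`. -/
def gradLog {S A : Type*} {d : ℕ} (pc : EuclideanSpace ℝ (Fin d) → S → A → ℝ)
    (θ : EuclideanSpace ℝ (Fin d)) (s : S) (a : A) : EuclideanSpace ℝ (Fin d) :=
  gradient (fun θ' => Real.log (pc θ' s a)) θ

/-!
Write `J(θ) = ∑ₜ γᵗ ρᵀ P_θᵗ r_θ` with `r_θ(s) = ∑ₐ π_θ(a|s) h(s,a)`. Since
`∇π_θ(a|s) = π_θ(a|s) ∇log π_θ(a|s)`, the score bound gives `∑ₐ ‖∇π_θ(a|s)‖ ≤ G`; hence every row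
of `P_θ` and every entry of `r_θ` has a derivative of norm at most `G`, while `P_θ` is stochastic
and `|r_θ| ≤ 1`. By the product rule the entries of `P_θᵗ r_θ` then stay in `[-1, 1]` and have
derivatives of norm at most `(t + 1) G`, and `∑ₜ γᵗ (t + 1) = 1 / (1 - γ)²` makes the series
differentiable term by term.
-/

open Finset

section Averaging

variable {E ι : Type*} [NormedAddCommGroup E] [NormedSpace ℝ E] [Fintype ι]

theorem abs_sum_mul_le_one {w g : ι → ℝ} (hw : ∑ i, |w i| = 1) (hg : ∀ i, |g i| ≤ 1) :
    |∑ i, w i * g i| ≤ 1 :=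
  calc |∑ i, w i * g i| ≤ ∑ i, |w i| * |g i| := by
        simpa only [abs_mul] using abs_sum_le_sum_abs (fun i => w i * g i) univ
    _ ≤ ∑ i, |w i| := sum_le_sum fun i _ => mul_le_of_le_one_right (abs_nonneg _) (hg i)
    _ = 1 := hw

theorem norm_fderiv_sum_mul_le {w g : E → ι → ℝ} {x : E}
    (hw : ∀ i, DifferentiableAt ℝ (fun y => w y i) x)
    (hg : ∀ i, DifferentiableAt ℝ (fun y => g y i) x) :
    ‖fderiv ℝ (fun y => ∑ i, w y i * g y i) x‖ ≤
      ∑ i, (|w x i| * ‖fderiv ℝ (fun y => g y i) x‖ +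
        |g x i| * ‖fderiv ℝ (fun y => w y i) x‖) := by
  rw [fderiv_fun_sum (A := fun i y => w y i * g y i) fun i _ => (hw i).mul (hg i)]
  refine (norm_sum_le _ _).trans (sum_le_sum fun i _ => ?_)
  rw [fderiv_fun_mul (hw i) (hg i)]
  refine (norm_add_le _ _).trans_eq ?_
  rw [norm_smul, norm_smul, Real.norm_eq_abs, Real.norm_eq_abs]

theorem norm_fderiv_sum_mul_le_add {w g : E → ι → ℝ} {x : E} {c G : ℝ}
    (hw : ∀ i, DifferentiableAt ℝ (fun y => w y i) x)
    (hg : ∀ i, DifferentiableAt ℝ (fun y => g y i) x)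
    (hw₁ : ∑ i, |w x i| = 1) (hdw : ∑ i, ‖fderiv ℝ (fun y => w y i) x‖ ≤ G)
    (hg₁ : ∀ i, |g x i| ≤ 1) (hdg : ∀ i, ‖fderiv ℝ (fun y => g y i) x‖ ≤ c) :
    ‖fderiv ℝ (fun y => ∑ i, w y i * g y i) x‖ ≤ c + G :=
  calc _ ≤ _ := norm_fderiv_sum_mul_le hw hg
    _ ≤ ∑ i, (|w x i| * c + ‖fderiv ℝ (fun y => w y i) x‖) :=
        sum_le_sum fun i _ => add_le_add (mul_le_mul_of_nonneg_left (hdg i) (abs_nonneg _))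
          (mul_le_of_le_one_left (norm_nonneg _) (hg₁ i))
    _ ≤ c + G := by rw [sum_add_distrib, ← sum_mul, hw₁, one_mul]; linarith

end Averaging

section Policy

variable {E A : Type*} [NormedAddCommGroup E] [NormedSpace ℝ E]

theorem norm_gradient_eq_norm_fderiv {F : Type*} [NormedAddCommGroup F] [InnerProductSpace ℝ F]
    [CompleteSpace F] (f : F → ℝ) (x : F) : ‖gradient f x‖ = ‖fderiv ℝ f x‖ := by
  rw [← toDual_gradient, LinearIsometryEquiv.norm_map]

theorem hasFDerivAt_of_differentiableAt_log {f : E → ℝ} {x : E} (hf : ∀ y, 0 < f y)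
    (hlog : DifferentiableAt ℝ (fun y => Real.log (f y)) x) :
    HasFDerivAt f (f x • fderiv ℝ (fun y => Real.log (f y)) x) x := by
  simpa only [Real.exp_log (hf _)] using hlog.hasFDerivAt.exp

theorem sum_norm_fderiv_le_of_norm_fderiv_log_le [Fintype A] {π : E → A → ℝ} {x : E} {G : ℝ}
    (hpos : ∀ y a, 0 < π y a) (hsum : ∑ a, π x a = 1)
    (hlog : ∀ a, DifferentiableAt ℝ (fun y => Real.log (π y a)) x)
    (hG : ∀ a, ‖fderiv ℝ (fun y => Real.log (π y a)) x‖ ≤ G) :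
    ∑ a, ‖fderiv ℝ (fun y => π y a) x‖ ≤ G :=
  calc ∑ a, ‖fderiv ℝ (fun y => π y a) x‖
      = ∑ a, π x a * ‖fderiv ℝ (fun y => Real.log (π y a)) x‖ := by
        refine sum_congr rfl fun a _ => ?_
        rw [(hasFDerivAt_of_differentiableAt_log (fun y => hpos y a) (hlog a)).fderiv,
          norm_smul, Real.norm_of_nonneg (hpos x a).le]
    _ ≤ ∑ a, π x a * G := sum_le_sum fun a _ => mul_le_mul_of_nonneg_left (hG a) (hpos x a).le
    _ = G := by rw [← sum_mul, hsum, one_mul]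

end Policy

section Iterates

variable {E n : Type*} [NormedAddCommGroup E] [NormedSpace ℝ E] [Fintype n] [DecidableEq n]

theorem sum_abs_of_mem_rowStochastic {M : Matrix n n ℝ} (hM : M ∈ rowStochastic ℝ n) (i : n) :
    ∑ j, |M i j| = 1 := by
  simp_rw [abs_of_nonneg (nonneg_of_mem_rowStochastic hM)]
  exact sum_row_of_mem_rowStochastic hM i

theorem abs_mulVec_le_one_of_mem_rowStochastic {M : Matrix n n ℝ} {v : n → ℝ}
    (hM : M ∈ rowStochastic ℝ n) (hv : ∀ i, |v i| ≤ 1) (i : n) : |(M *ᵥ v) i| ≤ 1 :=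
  abs_sum_mul_le_one (sum_abs_of_mem_rowStochastic hM i) hv

theorem pow_succ_mulVec_apply (M : Matrix n n ℝ) (t : ℕ) (v : n → ℝ) (i : n) :
    (M ^ (t + 1) *ᵥ v) i = ∑ j, M i j * (M ^ t *ᵥ v) j := by
  rw [pow_succ', ← mulVec_mulVec]
  rfl

variable {M : E → Matrix n n ℝ} {x : E → n → ℝ} {G : ℝ}

theorem differentiable_pow_mulVec_apply (hM : ∀ i j, Differentiable ℝ fun y => M y i j)
    (hx : ∀ i, Differentiable ℝ fun y => x y i) (t : ℕ) (i : n) :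
    Differentiable ℝ fun y => (M y ^ t *ᵥ x y) i := by
  induction t generalizing i with
  | zero => simpa using hx i
  | succ t ih =>
    simp_rw [pow_succ_mulVec_apply]
    exact Differentiable.fun_sum fun j _ => (hM i j).mul (ih j)

theorem norm_fderiv_pow_mulVec_apply_le (hMs : ∀ y, M y ∈ rowStochastic ℝ n)
    (hM : ∀ i j, Differentiable ℝ fun y => M y i j)
    (hdM : ∀ y i, ∑ j, ‖fderiv ℝ (fun z => M z i j) y‖ ≤ G)
    (hx₁ : ∀ y i, |x y i| ≤ 1) (hx : ∀ i, Differentiable ℝ fun y => x y i)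
    (hdx : ∀ y i, ‖fderiv ℝ (fun z => x z i) y‖ ≤ G) (t : ℕ) (y : E) (i : n) :
    ‖fderiv ℝ (fun z => (M z ^ t *ᵥ x z) i) y‖ ≤ (t + 1) * G := by
  induction t generalizing i with
  | zero => simpa using hdx y i
  | succ t ih =>
    simp_rw [pow_succ_mulVec_apply]
    calc _ ≤ (t + 1) * G + G :=
          norm_fderiv_sum_mul_le_add (fun j => hM i j y)
            (fun j => differentiable_pow_mulVec_apply hM hx t j y)
            (sum_abs_of_mem_rowStochastic (hMs y) i) (hdM y i)
            (abs_mulVec_le_one_of_mem_rowStochastic (pow_mem (hMs y) t) (hx₁ y)) ih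
      _ = (↑(t + 1) + 1) * G := by push_cast; ring

end Iterates

section DiscountedSum

variable {E n : Type*} [NormedAddCommGroup E] [NormedSpace ℝ E] [Fintype n]

theorem norm_fderiv_tsum_le {F : Type*} [NormedAddCommGroup F] [NormedSpace ℝ F] [CompleteSpace F]
    {f : ℕ → E → F} {u : ℕ → ℝ} {a : ℝ} (hu : HasSum u a) (hf : ∀ t, Differentiable ℝ (f t))
    (hf' : ∀ t y, ‖fderiv ℝ (f t) y‖ ≤ u t) {x₀ : E} (hf₀ : Summable fun t => f t x₀) (x : E) :
    ‖fderiv ℝ (fun y => ∑' t, f t y) x‖ ≤ a := by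
  rw [fderiv_tsum_apply hu.summable hf hf' hf₀]
  exact tsum_of_norm_bounded hu fun t => hf' t x

theorem hasSum_geometric_mul_succ {γ : ℝ} (hγ : ‖γ‖ < 1) :
    HasSum (fun t : ℕ => γ ^ t * (t + 1)) (1 / (1 - γ) ^ 2) := by
  simpa [mul_comm] using hasSum_choose_mul_geometric_of_norm_lt_one 1 hγ

theorem dotProduct_tsum {V : ℕ → n → ℝ} (hV : Summable V) (ρ : n → ℝ) :
    ρ ⬝ᵥ ∑' t, V t = ∑' t, ρ ⬝ᵥ V t :=
  calc ρ ⬝ᵥ ∑' t, V t = ∑ i, ∑' t, ρ i * V t i := by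
        simp only [dotProduct, tsum_apply hV, tsum_mul_left]
    _ = ∑' t, ρ ⬝ᵥ V t := (Summable.tsum_finsetSum fun i _ => (Pi.summable.1 hV i).mul_left _).symm

variable [DecidableEq n]

def discountedSum (γ : ℝ) (ρ : n → ℝ) (M : Matrix n n ℝ) (v : n → ℝ) : ℝ :=
  ∑' t : ℕ, γ ^ t * (ρ ⬝ᵥ (M ^ t *ᵥ v))

theorem abs_dotProduct_pow_mulVec_le_one {ρ : n → ℝ} {M : Matrix n n ℝ} {v : n → ℝ}
    (hρ : ∑ i, |ρ i| = 1) (hM : M ∈ rowStochastic ℝ n) (hv : ∀ i, |v i| ≤ 1) (t : ℕ) :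
    |ρ ⬝ᵥ (M ^ t *ᵥ v)| ≤ 1 :=
  abs_sum_mul_le_one hρ (abs_mulVec_le_one_of_mem_rowStochastic (pow_mem hM t) hv)

theorem tsum_smul_pow_mulVec_eq_discountedSum {γ : ℝ} {ρ : n → ℝ} {M : Matrix n n ℝ}
    {v : n → ℝ} (hM : M ∈ rowStochastic ℝ n) (hv : ∀ i, |v i| ≤ 1) (hγ₀ : 0 ≤ γ) (hγ₁ : γ < 1) :
    ρ ⬝ᵥ ∑' t : ℕ, γ ^ t • (M ^ t *ᵥ v) = discountedSum γ ρ M v := by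
  have hsum : Summable fun t : ℕ => γ ^ t • (M ^ t *ᵥ v) := by
    refine Pi.summable.2 fun i => (summable_geometric_of_lt_one hγ₀ hγ₁).of_norm_bounded
      fun t => ?_
    rw [Pi.smul_apply, norm_smul, norm_pow, Real.norm_of_nonneg hγ₀, Real.norm_eq_abs]
    exact mul_le_of_le_one_right (by positivity)
      (abs_mulVec_le_one_of_mem_rowStochastic (pow_mem hM t) hv i)
  simp only [dotProduct_tsum hsum, dotProduct_smul, smul_eq_mul, discountedSum]

variable {M : E → Matrix n n ℝ} {x : E → n → ℝ} {G γ : ℝ} {ρ : n → ℝ}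

theorem differentiable_dotProduct_pow_mulVec (hM : ∀ i j, Differentiable ℝ fun y => M y i j)
    (hx : ∀ i, Differentiable ℝ fun y => x y i) (t : ℕ) :
    Differentiable ℝ fun y => ρ ⬝ᵥ (M y ^ t *ᵥ x y) :=
  Differentiable.fun_sum fun i _ =>
    (differentiable_pow_mulVec_apply hM hx t i).const_mul (ρ i)

section
variable (hMs : ∀ y, M y ∈ rowStochastic ℝ n) (hM : ∀ i j, Differentiable ℝ fun y => M y i j)
    (hdM : ∀ y i, ∑ j, ‖fderiv ℝ (fun z => M z i j) y‖ ≤ G)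
    (hx₁ : ∀ y i, |x y i| ≤ 1) (hx : ∀ i, Differentiable ℝ fun y => x y i)
    (hdx : ∀ y i, ‖fderiv ℝ (fun z => x z i) y‖ ≤ G) (hρ : ∑ i, |ρ i| = 1)
    (hγ₀ : 0 ≤ γ) (hγ₁ : γ < 1)
include hMs hM hdM hx₁ hx hdx hρ hγ₀

theorem norm_fderiv_discounted_dotProduct_pow_mulVec_le (t : ℕ) (y : E) :
    ‖fderiv ℝ (fun z => γ ^ t * (ρ ⬝ᵥ (M z ^ t *ᵥ x z))) y‖ ≤ G * (γ ^ t * (t + 1)) := by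
  have hterm : ‖fderiv ℝ (fun z => ρ ⬝ᵥ (M z ^ t *ᵥ x z)) y‖ ≤ (t + 1) * G + 0 :=
    norm_fderiv_sum_mul_le_add (w := fun _ i => ρ i) (fun _ => differentiableAt_const _)
      (fun i => differentiable_pow_mulVec_apply hM hx t i y) hρ (by simp)
      (abs_mulVec_le_one_of_mem_rowStochastic (pow_mem (hMs y) t) (hx₁ y))
      (norm_fderiv_pow_mulVec_apply_le hMs hM hdM hx₁ hx hdx t y)
  rw [fderiv_const_mul (differentiable_dotProduct_pow_mulVec hM hx t y), norm_smul, norm_pow,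
    Real.norm_of_nonneg hγ₀]
  calc _ ≤ γ ^ t * ((t + 1) * G + 0) := by gcongr
    _ = _ := by ring

include hγ₁

theorem differentiable_discountedSum :
    Differentiable ℝ fun y => discountedSum γ ρ (M y) (x y) :=
  differentiable_tsum
    ((hasSum_geometric_mul_succ (by rwa [Real.norm_of_nonneg hγ₀])).summable.mul_left G)
    (fun t y => ((differentiable_dotProduct_pow_mulVec hM hx t).const_mul _ y).hasFDerivAt)
    (norm_fderiv_discounted_dotProduct_pow_mulVec_le hMs hM hdM hx₁ hx hdx hρ hγ₀)

theorem norm_fderiv_discountedSum_le (y : E) :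
    ‖fderiv ℝ (fun z => discountedSum γ ρ (M z) (x z)) y‖ ≤ G / (1 - γ) ^ 2 := by
  have hsum : Summable fun t : ℕ => γ ^ t * (ρ ⬝ᵥ (M y ^ t *ᵥ x y)) :=
    (summable_geometric_of_lt_one hγ₀ hγ₁).of_norm_bounded fun t => by
      rw [norm_mul, norm_pow, Real.norm_of_nonneg hγ₀, Real.norm_eq_abs]
      exact mul_le_of_le_one_right (by positivity)
        (abs_dotProduct_pow_mulVec_le_one hρ (hMs y) (hx₁ y) t)
  have hu := (hasSum_geometric_mul_succ (by rwa [Real.norm_of_nonneg hγ₀])).mul_left G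
  refine (norm_fderiv_tsum_le hu
    (fun t => (differentiable_dotProduct_pow_mulVec hM hx t).const_mul _)
    (norm_fderiv_discounted_dotProduct_pow_mulVec_le hMs hM hdM hx₁ hx hdx hρ hγ₀) hsum y).trans_eq
    (mul_one_div G _)

end

end DiscountedSum

section PolicyClass

variable {E S A : Type*} [NormedAddCommGroup E] [NormedSpace ℝ E] [Fintype A] {P : S → A → S → ℝ}
  {π : E → S → A → ℝ} {G : ℝ}

theorem differentiable_Pmat_apply (hπ : ∀ s a, Differentiable ℝ fun y => π y s a) (s s' : S) :
    Differentiable ℝ fun y => Pmat P (π y) s s' :=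
  Differentiable.fun_sum fun a _ => (hπ s a).mul_const _

theorem sum_norm_fderiv_Pmat_apply_le [Fintype S] (hP0 : ∀ s a s', 0 ≤ P s a s')
    (hP1 : ∀ s a, ∑ s', P s a s' = 1) (hπ : ∀ s a, Differentiable ℝ fun y => π y s a)
    (hdπ : ∀ y s, ∑ a, ‖fderiv ℝ (fun z => π z s a) y‖ ≤ G) (y : E) (s : S) :
    ∑ s', ‖fderiv ℝ (fun z => Pmat P (π z) s s') y‖ ≤ G :=
  calc ∑ s', ‖fderiv ℝ (fun z => Pmat P (π z) s s') y‖
      ≤ ∑ s', ∑ a, P s a s' * ‖fderiv ℝ (fun z => π z s a) y‖ :=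
        sum_le_sum fun s' _ => (norm_fderiv_sum_mul_le (g := fun _ a => P s a s')
          (fun a => hπ s a y) fun _ => differentiableAt_const _).trans_eq
          (by simp [abs_of_nonneg (hP0 _ _ _)])
    _ = ∑ a, ‖fderiv ℝ (fun z => π z s a) y‖ := by
        rw [sum_comm]
        simp only [← sum_mul, hP1, one_mul]
    _ ≤ G := hdπ y s

theorem norm_fderiv_expectedReward_le {h : S → A → ℝ} (hh : ∀ s a, |h s a| ≤ 1)
    (hπ0 : ∀ y s a, 0 ≤ π y s a) (hπ1 : ∀ y s, ∑ a, π y s a = 1)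
    (hπ : ∀ s a, Differentiable ℝ fun y => π y s a)
    (hdπ : ∀ y s, ∑ a, ‖fderiv ℝ (fun z => π z s a) y‖ ≤ G) (y : E) (s : S) :
    ‖fderiv ℝ (fun z => ∑ a, π z s a * h s a) y‖ ≤ G := by
  simpa using norm_fderiv_sum_mul_le_add (g := fun _ a => h s a) (c := 0) (fun a => hπ s a y)
    (fun _ => differentiableAt_const _) (by simp [abs_of_nonneg (hπ0 y s _), hπ1]) (hdπ y s)
    (hh s) (by simp)

end PolicyClass

section MarkovDecisionProcess

variable {S A : Type*} [Fintype S] [DecidableEq S] [Fintype A] {P : S → A → S → ℝ}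

theorem Pmat_mem_rowStochastic (hP0 : ∀ s a s', 0 ≤ P s a s') (hP1 : ∀ s a, ∑ s', P s a s' = 1)
    {π : S → A → ℝ} (hπ0 : ∀ s a, 0 ≤ π s a) (hπ1 : ∀ s, ∑ a, π s a = 1) :
    Pmat P π ∈ rowStochastic ℝ S := by
  refine mem_rowStochastic_iff_sum.2
    ⟨fun s s' => sum_nonneg fun a _ => mul_nonneg (hπ0 s a) (hP0 s a s'), fun s => ?_⟩
  simp only [Pmat, of_apply]
  rw [sum_comm]
  simp only [← mul_sum, hP1, mul_one, hπ1]

theorem Jval_eq_discountedSum {γ : ℝ} {ρ : S → ℝ} {h : S → A → ℝ} {π : S → A → ℝ}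
    (hPπ : Pmat P π ∈ rowStochastic ℝ S) (hr : ∀ s, |∑ a, π s a * h s a| ≤ 1) (hγ₀ : 0 ≤ γ)
    (hγ₁ : γ < 1) :
    Jval P γ ρ h π = discountedSum γ ρ (Pmat P π) fun s => ∑ a, π s a * h s a :=
  tsum_smul_pow_mulVec_eq_discountedSum hPπ hr hγ₀ hγ₁

end MarkovDecisionProcess

theorem stmt9_general {S A : Type*} [Fintype S] [DecidableEq S] [Fintype A]
    {d : ℕ}
    (P : S → A → S → ℝ) (hP0 : ∀ s a s', 0 ≤ P s a s') (hP1 : ∀ s a, ∑ s', P s a s' = 1)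
    (γ : ℝ) (hγ0 : 0 < γ) (hγ1 : γ < 1)
    (ρ : S → ℝ) (hρ0 : ∀ s, 0 ≤ ρ s) (hρ1 : ∑ s, ρ s = 1)
    (pc : EuclideanSpace ℝ (Fin d) → S → A → ℝ)
    (hpos : ∀ θ s a, 0 < pc θ s a) (hnorm : ∀ θ s, ∑ a, pc θ s a = 1)
    (hdiff : ∀ s a, Differentiable ℝ fun θ => Real.log (pc θ s a))
    (G : ℝ) (hG : ∀ θ s a, ‖gradLog pc θ s a‖ ≤ G)
    (h : S → A → ℝ) (hh : ∀ s a, |h s a| ≤ 1) :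
    Differentiable ℝ (fun θ => Jval P γ ρ h (pc θ)) ∧
    ∀ θ, ‖gradient (fun θ' => Jval P γ ρ h (pc θ')) θ‖ ≤ G / (1 - γ) ^ 2 := by
  have hπ : ∀ s a, Differentiable ℝ fun θ => pc θ s a := fun s a θ =>
    (hasFDerivAt_of_differentiableAt_log (fun θ => hpos θ s a) (hdiff s a θ)).differentiableAt
  have hdπ : ∀ θ s, ∑ a, ‖fderiv ℝ (fun θ' => pc θ' s a) θ‖ ≤ G := fun θ s =>
    sum_norm_fderiv_le_of_norm_fderiv_log_le (fun θ a => hpos θ s a) (hnorm θ s)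
      (fun a => hdiff s a θ) fun a => norm_gradient_eq_norm_fderiv _ θ ▸ hG θ s a
  have hMs : ∀ θ, Pmat P (pc θ) ∈ rowStochastic ℝ S := fun θ =>
    Pmat_mem_rowStochastic hP0 hP1 (fun s a => (hpos θ s a).le) (hnorm θ)
  have hr : ∀ θ s, |∑ a, pc θ s a * h s a| ≤ 1 := fun θ s =>
    abs_sum_mul_le_one (by simp [abs_of_pos (hpos θ s _), hnorm]) (hh s)
  have hρ : ∑ s, |ρ s| = 1 := by simp [abs_of_nonneg (hρ0 _), hρ1]
  have hJ : (fun θ => Jval P γ ρ h (pc θ)) =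
      fun θ => discountedSum γ ρ (Pmat P (pc θ)) fun s => ∑ a, pc θ s a * h s a :=
    funext fun θ => Jval_eq_discountedSum (hMs θ) (hr θ) hγ0.le hγ1
  have hrd : ∀ s, Differentiable ℝ fun θ => ∑ a, pc θ s a * h s a := fun s =>
    Differentiable.fun_sum fun a _ => (hπ s a).mul_const _
  have hdr := norm_fderiv_expectedReward_le hh (fun θ s a => (hpos θ s a).le) hnorm hπ hdπ
  have hdM := sum_norm_fderiv_Pmat_apply_le hP0 hP1 hπ hdπ
  rw [hJ]
  refine ⟨differentiable_discountedSum hMs (differentiable_Pmat_apply hπ) hdM hr hrd hdr hρ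
    hγ0.le hγ1, fun θ => ?_⟩
  rw [norm_gradient_eq_norm_fderiv]
  exact norm_fderiv_discountedSum_le hMs (differentiable_Pmat_apply hπ) hdM hr hrd hdr hρ
    hγ0.le hγ1 θ

/-- Lemma 2 of the paper. Under the score bound `‖∇_θ log π_θ(a|s)‖ ≤ G`
and `|h| ≤ 1`, the map `θ ↦ J_h(π_θ)` is differentiable with
`‖∇_θ J_h(π_θ)‖ ≤ G/(1-γ)²`. -/
theorem stmt9 {S A : Type*} [Fintype S] [DecidableEq S] [Fintype A] [Nonempty S] [Nonempty A]
    {d : ℕ}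
    (P : S → A → S → ℝ) (hP0 : ∀ s a s', 0 ≤ P s a s') (hP1 : ∀ s a, ∑ s', P s a s' = 1)
    (γ : ℝ) (hγ0 : 0 < γ) (hγ1 : γ < 1)
    (ρ : S → ℝ) (hρ0 : ∀ s, 0 ≤ ρ s) (hρ1 : ∑ s, ρ s = 1)
    (pc : EuclideanSpace ℝ (Fin d) → S → A → ℝ)
    (hpos : ∀ θ s a, 0 < pc θ s a) (hnorm : ∀ θ s, ∑ a, pc θ s a = 1)
    (hdiff : ∀ s a, Differentiable ℝ fun θ => Real.log (pc θ s a))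
    (G : ℝ) (hG : ∀ θ s a, ‖gradLog pc θ s a‖ ≤ G)
    (h : S → A → ℝ) (hh : ∀ s a, |h s a| ≤ 1) :
    Differentiable ℝ (fun θ => Jval P γ ρ h (pc θ)) ∧
    ∀ θ, ‖gradient (fun θ' => Jval P γ ρ h (pc θ')) θ‖ ≤ G / (1 - γ) ^ 2 :=
  stmt9_general P hP0 hP1 γ hγ0 hγ1 ρ hρ0 hρ1 pc hpos hnorm hdiff G hG h hh
end
end

section
/- Natural-gradient ascent inequality (the per-step core of the paper's first-order stationarity Lemma 4): Let f : ℝ^d → ℝ be differentiable with L-Lipschitz gradient (L > 0), let F be a symmetric d×d real matrix with μ I ⪯ F ⪯ G² I for some 0 < μ and G > 0, let η > 0, let θ ∈ ℝ^d, and set θ* = θ + η F^{-1} ∇f(θ). Then for every θ⁺ ∈ ℝ^d: f(θ⁺) ≥ f(θ) + ( η/(2G²) − Lη²/μ² ) ‖∇f(θ)‖₂² − ( G²/(2η) + L ) ‖θ⁺ − θ*‖₂². -/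
/-!
Write `g = ∇f(θ)` and `w = F⁻¹ g`, so that `θ* = θ + η w`, and `U = θ⁺ - θ*`. The descent lemma
for the `L`-smooth `f` gives `f θ⁺ ≥ f θ + ⟪g, U⟫ + η ⟪g, w⟫ - L/2 ‖U + η w‖²`. The spectral
bounds `μ ≤ F ≤ G²` give `⟪g, w⟫ ≥ ‖g‖² / G²` (expand `⟪F (G² w - g), G² w - g⟫ ≥ 0`) and
`‖w‖ ≤ ‖g‖ / μ`; Young's inequality bounds `⟪g, U⟫` from below, and
`‖U + η w‖² ≤ 2‖U‖² + 2η²‖w‖²`.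
-/

open Matrix
open scoped RealInnerProductSpace

section LipschitzGradient

variable {E : Type*} [NormedAddCommGroup E] [InnerProductSpace ℝ E] [CompleteSpace E]
  {f : E → ℝ}

theorem Differentiable.hasDerivAt_comp_add_smul (hf : Differentiable ℝ f) (x v : E) (t : ℝ) :
    HasDerivAt (fun s : ℝ => f (x + s • v)) ⟪gradient f (x + t • v), v⟫ t := by
  have hline : HasDerivAt (fun s : ℝ => x + s • v) v t := by
    simpa using ((hasDerivAt_id t).smul_const v).const_add x
  simpa [InnerProductSpace.toDual_apply_apply, Function.comp_def] using
    (hf (x + t • v)).hasGradientAt.hasFDerivAt.comp_hasDerivAt t hline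

theorem add_inner_gradient_sub_le_of_lipschitz_gradient (hf : Differentiable ℝ f) {L : ℝ}
    (hlip : ∀ x y, ‖gradient f x - gradient f y‖ ≤ L * ‖x - y‖) (x y : E) :
    f x + ⟪gradient f x, y - x⟫ - L / 2 * ‖y - x‖ ^ 2 ≤ f y := by
  set v := y - x
  let ψ : ℝ → ℝ := fun t => f (x + t • v) - t * ⟪gradient f x, v⟫ + L / 2 * t ^ 2 * ‖v‖ ^ 2
  have hψ : ∀ t,
      HasDerivAt ψ (⟪gradient f (x + t • v) - gradient f x, v⟫ + L * t * ‖v‖ ^ 2) t := by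
    intro t
    refine (((hf.hasDerivAt_comp_add_smul x v t).sub
      ((hasDerivAt_id' t).mul_const ⟪gradient f x, v⟫)).add
      (((hasDerivAt_pow 2 t).const_mul (L / 2)).mul_const (‖v‖ ^ 2))).congr_deriv ?_
    rw [inner_sub_left]
    ring
  have hψ' : ∀ t ∈ interior (Set.Ici (0 : ℝ)),
      0 ≤ ⟪gradient f (x + t • v) - gradient f x, v⟫ + L * t * ‖v‖ ^ 2 := by
    intro t ht
    rw [interior_Ici] at ht
    have : |⟪gradient f (x + t • v) - gradient f x, v⟫| ≤ L * t * ‖v‖ ^ 2 :=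
      calc |⟪gradient f (x + t • v) - gradient f x, v⟫|
          ≤ ‖gradient f (x + t • v) - gradient f x‖ * ‖v‖ := abs_real_inner_le_norm _ _
        _ ≤ L * ‖x + t • v - x‖ * ‖v‖ := by gcongr; exact hlip _ _
        _ = L * t * ‖v‖ ^ 2 := by
          rw [add_sub_cancel_left, norm_smul, Real.norm_of_nonneg ht.le]; ring
    linarith [neg_abs_le ⟪gradient f (x + t • v) - gradient f x, v⟫]
  have hmono := monotoneOn_of_hasDerivWithinAt_nonneg (convex_Ici 0)
    (fun t _ => (hψ t).continuousAt.continuousWithinAt)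
    (fun t _ => (hψ t).hasDerivWithinAt) hψ'
  have h01 : ψ 0 ≤ ψ 1 := hmono Set.self_mem_Ici (Set.mem_Ici.2 zero_le_one) zero_le_one
  have hxv : x + v = y := add_sub_cancel x y
  simp only [ψ, zero_smul, add_zero, zero_mul, one_smul, one_mul, one_pow, mul_one, ne_eq,
    OfNat.ofNat_ne_zero, not_false_eq_true, zero_pow, mul_zero, sub_zero, hxv] at h01
  linarith

end LipschitzGradient

section BoundedPositiveOperator

variable {E : Type*} [NormedAddCommGroup E] [InnerProductSpace ℝ E] {T : E →ₗ[ℝ] E}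

theorem LinearMap.IsPositive.sq_norm_apply_le_mul_inner (hT : T.IsPositive) {C : ℝ}
    (hC : 0 < C) (hup : ∀ v, ⟪T v, v⟫ ≤ C * ‖v‖ ^ 2) (w : E) :
    ‖T w‖ ^ 2 ≤ C * ⟪T w, w⟫ := by
  have hsq : 0 ≤ ⟪T (C • w - T w), C • w - T w⟫ := by
    simpa using hT.re_inner_nonneg_left (C • w - T w)
  have hcross : ⟪T (T w), w⟫ = ‖T w‖ ^ 2 := by
    rw [hT.isSymmetric, real_inner_self_eq_norm_sq]
  simp only [map_sub, map_smul, inner_sub_left, inner_sub_right, inner_smul_left,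
    inner_smul_right, hcross, real_inner_self_eq_norm_sq, RCLike.conj_to_real] at hsq
  exact le_of_mul_le_mul_left (by linarith [hup (T w)]) hC

theorem LinearMap.mul_norm_le_norm_apply {μ : ℝ} (hlow : ∀ v, μ * ‖v‖ ^ 2 ≤ ⟪T v, v⟫) (w : E) :
    μ * ‖w‖ ≤ ‖T w‖ := by
  rcases (norm_nonneg w).eq_or_lt with hw0 | hw0
  · simp [← hw0]
  · refine le_of_mul_le_mul_right ?_ hw0
    calc μ * ‖w‖ * ‖w‖ = μ * ‖w‖ ^ 2 := by ring
      _ ≤ ⟪T w, w⟫ := hlow w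
      _ ≤ ‖T w‖ * ‖w‖ := real_inner_le_norm _ w

end BoundedPositiveOperator

theorem natural_gradient_step_lower_bound {E : Type*} [NormedAddCommGroup E]
    [InnerProductSpace ℝ E] [CompleteSpace E] {f : E → ℝ} (hf : Differentiable ℝ f) {L : ℝ}
    (hL : 0 ≤ L) (hlip : ∀ x y, ‖gradient f x - gradient f y‖ ≤ L * ‖x - y‖)
    {T : E →ₗ[ℝ] E} (hT : T.IsSymmetric) {μ G : ℝ} (hμ : 0 < μ) (hG : 0 < G)
    (hlow : ∀ v, μ * ‖v‖ ^ 2 ≤ ⟪T v, v⟫) (hup : ∀ v, ⟪T v, v⟫ ≤ G ^ 2 * ‖v‖ ^ 2)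
    {η : ℝ} (hη : 0 < η) {θ w : E} (hw : T w = gradient f θ) (θplus : E) :
    f θ + (η / (2 * G ^ 2) - L * η ^ 2 / μ ^ 2) * ‖gradient f θ‖ ^ 2
      - (G ^ 2 / (2 * η) + L) * ‖θplus - (θ + η • w)‖ ^ 2 ≤ f θplus := by
  set g := gradient f θ
  set U := θplus - (θ + η • w)
  have hdesc := add_inner_gradient_sub_le_of_lipschitz_gradient hf hlip θ θplus
  rw [show θplus - θ = U + η • w by simp only [U]; abel, inner_add_right,
    real_inner_smul_right] at hdesc
  have hTpos : T.IsPositive :=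
    ⟨hT, fun v => by simpa using (mul_nonneg hμ.le (sq_nonneg ‖v‖)).trans (hlow v)⟩
  have hgw : η / G ^ 2 * ‖g‖ ^ 2 ≤ η * ⟪g, w⟫ := by
    have := hw ▸ hTpos.sq_norm_apply_le_mul_inner (by positivity) hup w
    rw [div_mul_eq_mul_div, div_le_iff₀ (by positivity)]
    linear_combination η * this
  have hw_le : ‖w‖ ^ 2 ≤ ‖g‖ ^ 2 / μ ^ 2 := by
    rw [le_div_iff₀ (by positivity), ← mul_pow, mul_comm]
    exact pow_le_pow_left₀ (by positivity) (hw ▸ T.mul_norm_le_norm_apply hlow w) 2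
  have hgU : -(η / G ^ 2 * ‖g‖ ^ 2 + G ^ 2 / η * ‖U‖ ^ 2) / 2 ≤ ⟪g, U⟫ := by
    have := two_mul_le_add_mul_sq (a := ‖g‖) (b := ‖U‖) (ε := η / G ^ 2) (by positivity)
    rw [inv_div] at this
    linarith [neg_abs_le ⟪g, U⟫, abs_real_inner_le_norm g U]
  have hUw : ‖U + η • w‖ ^ 2 ≤ 2 * ‖U‖ ^ 2 + 2 * η ^ 2 * ‖w‖ ^ 2 := by
    calc ‖U + η • w‖ ^ 2 ≤ (‖U‖ + ‖η • w‖) ^ 2 := by gcongr; exact norm_add_le U (η • w)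
      _ ≤ 2 * (‖U‖ ^ 2 + ‖η • w‖ ^ 2) := add_sq_le
      _ = 2 * ‖U‖ ^ 2 + 2 * η ^ 2 * ‖w‖ ^ 2 := by
        rw [norm_smul, Real.norm_of_nonneg hη.le]; ring
  have hLUw : L * ‖U + η • w‖ ^ 2 ≤ L * (2 * ‖U‖ ^ 2 + 2 * η ^ 2 * (‖g‖ ^ 2 / μ ^ 2)) := by
    gcongr
    exact hUw.trans (by gcongr)
  linear_combination hdesc + hgU + hgw + hLUw / 2

theorem Matrix.isUnit_det_of_forall_mul_sum_sq_le {n : Type*} [Fintype n] [DecidableEq n]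
    {F : Matrix n n ℝ} {μ : ℝ} (hμ : 0 < μ)
    (hlow : ∀ v : n → ℝ, μ * ∑ i, v i ^ 2 ≤ v ⬝ᵥ F *ᵥ v) :
    IsUnit F.det := by
  rw [isUnit_iff_ne_zero, ne_eq, ← exists_mulVec_eq_zero_iff]
  rintro ⟨v, hv, hFv⟩
  have hsum : ∑ i, v i ^ 2 ≤ 0 :=
    nonpos_of_mul_nonpos_right (by simpa [hFv] using hlow v) hμ
  refine hv (funext fun i => ?_)
  exact pow_eq_zero_iff two_ne_zero |>.1 <|
    (Finset.sum_eq_zero_iff_of_nonneg fun j _ => sq_nonneg (v j)).1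
      (hsum.antisymm (by positivity)) i (Finset.mem_univ i)

theorem Matrix.inner_toEuclideanLin_self {n : Type*} [Fintype n] [DecidableEq n]
    (F : Matrix n n ℝ) (v : EuclideanSpace ℝ n) :
    ⟪toEuclideanLin F v, v⟫ = WithLp.ofLp v ⬝ᵥ F *ᵥ WithLp.ofLp v := by
  simp [EuclideanSpace.inner_eq_star_dotProduct]

/-- Natural-gradient ascent inequality: for `f` differentiable with
`L`-Lipschitz gradient, a symmetric matrix `F` with `μI ⪯ F ⪯ G²I`, a step size `η > 0`
and the exact natural-gradient iterate `θ* = θ + η F⁻¹ ∇f(θ)`, every `θ⁺` satisfies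
`f(θ⁺) ≥ f(θ) + (η/(2G²) − Lη²/μ²) ‖∇f(θ)‖² − (G²/(2η) + L) ‖θ⁺ − θ*‖²`. -/
theorem stmt16 {d : ℕ} (f : EuclideanSpace ℝ (Fin d) → ℝ) (hf : Differentiable ℝ f)
    (L : ℝ) (hL : 0 < L)
    (hlip : ∀ x y, ‖gradient f x - gradient f y‖ ≤ L * ‖x - y‖)
    (F : Matrix (Fin d) (Fin d) ℝ) (hsym : F.IsSymm)
    (μ G : ℝ) (hμ : 0 < μ) (hG : 0 < G)
    (hlow : ∀ v : Fin d → ℝ, μ * ∑ i, v i ^ 2 ≤ v ⬝ᵥ F.mulVec v)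
    (hup : ∀ v : Fin d → ℝ, v ⬝ᵥ F.mulVec v ≤ G ^ 2 * ∑ i, v i ^ 2)
    (η : ℝ) (hη : 0 < η)
    (θ θstar : EuclideanSpace ℝ (Fin d))
    (hθstar : ∀ i, θstar i = θ i + η * F⁻¹.mulVec (fun j => gradient f θ j) i) :
    ∀ θplus : EuclideanSpace ℝ (Fin d),
      f θ + (η / (2 * G ^ 2) - L * η ^ 2 / μ ^ 2) * ‖gradient f θ‖ ^ 2
          - (G ^ 2 / (2 * η) + L) * ‖θplus - θstar‖ ^ 2 ≤ f θplus := by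
  intro θplus
  set T := toEuclideanLin F
  set w := toEuclideanLin F⁻¹ (gradient f θ)
  have hT : T.IsSymmetric := isSymmetric_toEuclideanLin_iff.2 hsym
  have hw : T w = gradient f θ := by
    ext i
    simp [T, w, mulVec_mulVec, mul_nonsing_inv F (isUnit_det_of_forall_mul_sum_sq_le hμ hlow)]
  have hθstar' : θstar = θ + η • w := by
    ext i
    simp [hθstar, w]
  rw [hθstar']
  refine natural_gradient_step_lower_bound hf hL.le hlip hT hμ hG (fun v => ?_) (fun v => ?_)
    hη hw θplus
  · simpa [T, inner_toEuclideanLin_self, EuclideanSpace.real_norm_sq_eq] using hlow v.ofLp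
  · simpa [T, inner_toEuclideanLin_self, EuclideanSpace.real_norm_sq_eq] using hup v.ofLp
end
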